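/- arXiv:1804.10449 — 3 statements merged into one kernel-verified Lean document; each statement's English description precedes it below -/
import Mathlib

section
/- The real part M_ℝ = M(U) ∩ ℝ of an origami set M(U) is an additive subgroup of ℝ containing ℤ. -/
open Real Complex Set

/-- The `θ`-projection of `z`: the unique real `x` with `z ∈ x + ℝ·exp(iθ)`
(for `θ ∈ (0,π)`); explicitly `x = Re z − Im z · cos θ / sin θ`. -/
noncomputable def proj (θ : ℝ) (z : ℂ) : ℝ := z.re - z.im * Real.cos θ / Real.sin θ

/-- `inter α β r s` is the (unique, for distinct `α β ∈ (0,π)`) complex number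
with `α`-projection `r` and `β`-projection `s`, i.e. `⟦r,s⟧_{α,β}`. -/
noncomputable def inter (α β r s : ℝ) : ℂ :=
  Classical.epsilon fun z : ℂ => proj α z = r ∧ proj β z = s

/-- The line through `z` with slope (angle) `θ`. -/
def lineThru (z : ℂ) (θ : ℝ) : Set ℂ := {w | ∃ t : ℝ, w = z + t * Complex.exp (θ * Complex.I)}

/-- The recursively defined stages of the origami set. -/
def origamiStep (U : Set ℝ) : ℕ → Set ℂ
  | 0 => {0, 1}
  | k + 1 => {w | ∃ z ∈ origamiStep U k, ∃ z' ∈ origamiStep U k,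
      ∃ γ ∈ U, ∃ γ' ∈ U, γ ≠ γ' ∧ w ∈ lineThru z γ ∧ w ∈ lineThru z' γ'}

/-- The origami set `M(U)`. -/
def origami (U : Set ℝ) : Set ℂ := ⋃ k, origamiStep U k

/-- The real part `M_ℝ = M(U) ∩ ℝ`, viewed as a set of reals. -/
def origamiR (U : Set ℝ) : Set ℝ := {x : ℝ | (x : ℂ) ∈ origami U}
/-!
Take two directions `α ≠ β` in `U \ {0}`. For real `x, y ∈ M(U)` fold
`z = (x + ℝe^{iα}) ∩ ℝe^{iβ}` and `w = (z + ℝ) ∩ (y + ℝe^{iα})`. The points `x, z, w, y`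
form a parallelogram, so `w = z + (y - x)`, and since `ℝe^{iβ}` passes through `0` and `z`,
`(w + ℝe^{iβ}) ∩ ℝ = y - x`. Hence `M_ℝ` contains `0, 1` and is closed under subtraction.
-/

lemma mem_lineThru_iff {w z : ℂ} {θ : ℝ} :
    w ∈ lineThru z θ ↔ (w - z).im * Real.cos θ = (w - z).re * Real.sin θ := by
  have hexp : Complex.exp (θ * I) = Real.cos θ + Real.sin θ * I := by
    rw [Complex.exp_mul_I, ← Complex.ofReal_cos, ← Complex.ofReal_sin]
  constructor
  · rintro ⟨t, rfl⟩
    simp only [add_sub_cancel_left, hexp, Complex.mul_re, Complex.mul_im, Complex.add_re,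
      Complex.add_im, Complex.ofReal_re, Complex.ofReal_im, Complex.I_re, Complex.I_im]
    ring
  · intro h
    refine ⟨(w - z).re * Real.cos θ + (w - z).im * Real.sin θ, ?_⟩
    rw [← sub_eq_iff_eq_add', hexp]
    apply Complex.ext <;>
      simp only [Complex.mul_re, Complex.mul_im, Complex.add_re, Complex.add_im,
        Complex.ofReal_re, Complex.ofReal_im, Complex.I_re, Complex.I_im]
    · linear_combination (-Real.sin θ) * h - (w - z).re * Real.sin_sq_add_cos_sq θ
    · linear_combination Real.cos θ * h - (w - z).im * Real.sin_sq_add_cos_sq θ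

lemma self_mem_lineThru (z : ℂ) (θ : ℝ) : z ∈ lineThru z θ := ⟨0, by simp⟩

lemma exists_mem_lineThru_inter {α β : ℝ} (h : Real.sin (α - β) ≠ 0) (z z' : ℂ) :
    ∃ w, w ∈ lineThru z α ∧ w ∈ lineThru z' β := by
  set v := z - z'
  set t := (v.re * Real.sin β - v.im * Real.cos β) / Real.sin (α - β)
  refine ⟨z + t * Complex.exp (α * I), ⟨t, rfl⟩, mem_lineThru_iff.2 ?_⟩
  have ht : t * Real.sin (α - β) = v.re * Real.sin β - v.im * Real.cos β :=
    div_mul_cancel₀ _ h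
  rw [Real.sin_sub] at ht
  simp only [add_sub_right_comm z, Complex.add_re, Complex.add_im, Complex.re_ofReal_mul,
    Complex.im_ofReal_mul, Complex.exp_ofReal_mul_I_re, Complex.exp_ofReal_mul_I_im]
  linear_combination ht

section
variable {U : Set ℝ}

lemma origamiStep_monotone {γ γ' : ℝ} (hγ : γ ∈ U) (hγ' : γ' ∈ U) (hne : γ ≠ γ') :
    Monotone (origamiStep U) :=
  monotone_nat_of_le_succ fun _ z hz =>
    ⟨z, hz, z, hz, γ, hγ, γ', hγ', hne, self_mem_lineThru z γ, self_mem_lineThru z γ'⟩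

lemma mem_origami_of_mem_lineThru {z z' w : ℂ} (hz : z ∈ origami U) (hz' : z' ∈ origami U)
    {γ γ' : ℝ} (hγ : γ ∈ U) (hγ' : γ' ∈ U) (hne : γ ≠ γ')
    (hw : w ∈ lineThru z γ) (hw' : w ∈ lineThru z' γ') : w ∈ origami U := by
  obtain ⟨k, hk⟩ := mem_iUnion.1 hz
  obtain ⟨m, hm⟩ := mem_iUnion.1 hz'
  have hmono := origamiStep_monotone hγ hγ' hne
  exact mem_iUnion.2 ⟨max k m + 1, z, hmono (le_max_left k m) hk,
    z', hmono (le_max_right k m) hm, γ, hγ, γ', hγ', hne, hw, hw'⟩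

lemma zero_mem_origamiR : (0 : ℝ) ∈ origamiR U := mem_iUnion.2 ⟨0, by simp [origamiStep]⟩

lemma one_mem_origamiR : (1 : ℝ) ∈ origamiR U := mem_iUnion.2 ⟨0, by simp [origamiStep]⟩

lemma sub_mem_origamiR {α β : ℝ} (hα : α ∈ U) (hβ : β ∈ U) (h0 : (0 : ℝ) ∈ U)
    (hsα : Real.sin α ≠ 0) (hsβ : Real.sin β ≠ 0) (hsαβ : Real.sin (α - β) ≠ 0)
    {x y : ℝ} (hx : x ∈ origamiR U) (hy : y ∈ origamiR U) : y - x ∈ origamiR U := by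
  have hα0 : α ≠ 0 := by rintro rfl; exact hsα Real.sin_zero
  have hβ0 : β ≠ 0 := by rintro rfl; exact hsβ Real.sin_zero
  have hαβ : α ≠ β := by rintro rfl; exact hsαβ (by simp)
  obtain ⟨z, hzx, hz0⟩ := exists_mem_lineThru_inter hsαβ x 0
  obtain ⟨w, hwz, hwy⟩ := exists_mem_lineThru_inter (α := 0) (by simpa using hsα) z y
  have hz : z ∈ origami U :=
    mem_origami_of_mem_lineThru hx zero_mem_origamiR hα hβ hαβ hzx hz0
  have hw : w ∈ origami U := mem_origami_of_mem_lineThru hz hy h0 hα hα0.symm hwz hwy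
  have hparallelogram : w - z = (y - x : ℝ) := by
    rw [mem_lineThru_iff] at hzx hwz hwy
    simp only [Real.cos_zero, Real.sin_zero, mul_one, mul_zero, Complex.sub_re,
      Complex.sub_im, Complex.ofReal_re, Complex.ofReal_im, sub_zero] at hzx hwz hwy
    have hre : (w.re - z.re - (y - x)) * Real.sin α = 0 := by
      linear_combination hzx - hwy + Real.cos α * hwz
    apply Complex.ext <;>
      simp only [Complex.sub_re, Complex.sub_im, Complex.ofReal_re, Complex.ofReal_im]
    · linarith [(mul_eq_zero.1 hre).resolve_right hsα]
    · linarith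
  refine mem_origami_of_mem_lineThru hw zero_mem_origamiR hβ h0 hβ0 ?_ ?_
  · rw [mem_lineThru_iff] at hz0 ⊢
    have hneg : ((y - x : ℝ) : ℂ) - w = -(z - 0) := by rw [← hparallelogram]; ring
    rw [hneg, Complex.neg_re, Complex.neg_im, neg_mul, neg_mul, hz0]
  · rw [mem_lineThru_iff]
    simp

lemma exists_transversal_directions (hU : U ⊆ Ico 0 π) (h0 : (0 : ℝ) ∈ U)
    (hcard : 3 ≤ U.encard) : ∃ α ∈ U, ∃ β ∈ U,
      Real.sin α ≠ 0 ∧ Real.sin β ≠ 0 ∧ Real.sin (α - β) ≠ 0 := by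
  have hcard' : 1 < (U \ {0}).encard := by
    rw [← encard_sdiff_singleton_add_one h0] at hcard
    contrapose! hcard
    calc (U \ {0}).encard + 1 ≤ 1 + 1 := by gcongr
      _ < 3 := by norm_num
  obtain ⟨α, β, ⟨hα, hα0⟩, ⟨hβ, hβ0⟩, hαβ⟩ := one_lt_encard_iff.1 hcard'
  have hpos : ∀ θ ∈ U, θ ≠ 0 → 0 < θ ∧ θ < π := fun θ hθ hθ0 =>
    ⟨(hU hθ).1.lt_of_ne' hθ0, (hU hθ).2⟩
  obtain ⟨hα₁, hα₂⟩ := hpos α hα hα0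
  obtain ⟨hβ₁, hβ₂⟩ := hpos β hβ hβ0
  refine ⟨α, hα, β, hβ, (Real.sin_pos_of_pos_of_lt_pi hα₁ hα₂).ne',
    (Real.sin_pos_of_pos_of_lt_pi hβ₁ hβ₂).ne', ?_⟩
  rw [Ne, Real.sin_eq_zero_iff_of_lt_of_lt (by linarith) (by linarith)]
  exact sub_ne_zero.2 hαβ

end

theorem origamiR_addSubgroup (U : Set ℝ) (hU : U ⊆ Set.Ico 0 Real.pi) (h0 : (0 : ℝ) ∈ U)
    (hcard : 3 ≤ U.encard) :
    ∃ G : AddSubgroup ℝ, (G : Set ℝ) = origamiR U ∧ ∀ n : ℤ, (n : ℝ) ∈ G := by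
  obtain ⟨α, hα, β, hβ, hsα, hsβ, hsαβ⟩ := exists_transversal_directions hU h0 hcard
  let G := AddSubgroup.ofSub (origamiR U) ⟨0, zero_mem_origamiR⟩ fun x hx y hy => by
    simpa only [sub_eq_add_neg] using sub_mem_origamiR hα hβ h0 hsα hsβ hsαβ hy hx
  refine ⟨G, rfl, fun n => ?_⟩
  simpa only [zsmul_one] using G.zsmul_mem (one_mem_origamiR (U := U)) n
end

section
/- Let U ⊆ [0, π) with 0 ∈ U and |U| ≥ 3, let α, β be distinct nonzero elements of U, and let M = M(U) with real part M_ℝ. Then M = M_ℝ + M_ℝ · ⟦0,1⟧, i.e. M = { r + s·⟦0,1⟧ : r, s ∈ M_ℝ }. In particular, M is an additive subgroup of ℂ. -/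
open Real Complex Set

/-!
A point `z` is determined by its projections `proj α z`, `proj β z` to the real axis along the
directions `α` and `β`, and `z ∈ M` iff both projections lie in `M_ℝ` (project along `α` and along
the horizontal direction `0`; conversely intersect the two lines). Moreover `M_ℝ` is closed under
addition: if `p` has projections `0` and `y`, then `p + x` is the intersection of the horizontal
line through `p` with the `α`-line through `x`, and its `β`-projection is `x + y`. Since the
projections are additive, `M` is closed under addition, and the point reflection `z ↦ 1 - z`
gives negation. Finally `z = proj α z + (proj β z - proj α z) · ⟦0,1⟧`.
-/

namespace Origami

section Projection

lemma proj_add (θ : ℝ) (z w : ℂ) : proj θ (z + w) = proj θ z + proj θ w := by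
  simp only [proj, add_re, add_im]; ring

lemma proj_ofReal (θ r : ℝ) : proj θ (r : ℂ) = r := by
  simp [proj]

lemma proj_ofReal_mul (θ s : ℝ) (z : ℂ) : proj θ ((s : ℂ) * z) = s * proj θ z := by
  simp only [proj, re_ofReal_mul, im_ofReal_mul]; ring

lemma proj_sub_proj {θ φ : ℝ} (hθ : Real.sin θ ≠ 0) (hφ : Real.sin φ ≠ 0) (z : ℂ) :
    proj θ z - proj φ z = z.im * Real.sin (θ - φ) / (Real.sin θ * Real.sin φ) := by
  simp only [proj, Real.sin_sub]
  field_simp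
  ring

variable {α β : ℝ} (hα : Real.sin α ≠ 0) (hβ : Real.sin β ≠ 0) (hαβ : Real.sin (α - β) ≠ 0)
include hα hβ hαβ

lemma eq_of_proj_eq {z w : ℂ} (h₁ : proj α z = proj α w) (h₂ : proj β z = proj β w) :
    z = w := by
  have him : z.im = w.im := by
    have h := proj_sub_proj hα hβ z
    rw [h₁, h₂, proj_sub_proj hα hβ w] at h
    field_simp at h
    exact h.symm
  refine Complex.ext ?_ him
  simp only [proj, him] at h₁
  linarith

lemma exists_proj_eq (r s : ℝ) : ∃ z : ℂ, proj α z = r ∧ proj β z = s := by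
  set y := (r - s) * (Real.sin α * Real.sin β) / Real.sin (α - β)
  have hα' : proj α ⟨r + y * Real.cos α / Real.sin α, y⟩ = r := by simp [proj]
  refine ⟨⟨r + y * Real.cos α / Real.sin α, y⟩, hα', ?_⟩
  have h := proj_sub_proj hα hβ ⟨r + y * Real.cos α / Real.sin α, y⟩
  have hy : y * Real.sin (α - β) / (Real.sin α * Real.sin β) = r - s := by
    simp only [y]
    field_simp
  rw [hα', hy] at h
  linarith

lemma proj_inter (r s : ℝ) : proj α (inter α β r s) = r ∧ proj β (inter α β r s) = s :=
  Classical.epsilon_spec (p := fun z : ℂ => proj α z = r ∧ proj β z = s)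
    (exists_proj_eq hα hβ hαβ r s)

end Projection

lemma mem_lineThru_iff {θ : ℝ} (hθ : Real.sin θ ≠ 0) {z w : ℂ} :
    w ∈ lineThru z θ ↔ proj θ w = proj θ z := by
  constructor
  · rintro ⟨t, rfl⟩
    simp only [proj, add_re, add_im, re_ofReal_mul, im_ofReal_mul, exp_ofReal_mul_I_re,
      exp_ofReal_mul_I_im]
    field_simp
    ring
  · intro h
    refine ⟨(w.im - z.im) / Real.sin θ, ?_⟩
    simp only [proj] at h
    apply Complex.ext
    · simp only [add_re, re_ofReal_mul, exp_ofReal_mul_I_re]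
      field_simp at h ⊢
      linarith
    · simp only [add_im, im_ofReal_mul, exp_ofReal_mul_I_im]
      field_simp
      ring

lemma mem_lineThru_zero_iff {z w : ℂ} : w ∈ lineThru z 0 ↔ w.im = z.im := by
  constructor
  · rintro ⟨t, rfl⟩
    simp
  · intro h
    exact ⟨w.re - z.re, Complex.ext (by simp) (by simp [h])⟩

lemma mem_lineThru_self (z : ℂ) (θ : ℝ) : z ∈ lineThru z θ := ⟨0, by simp⟩

section Closure

variable {U : Set ℝ}

lemma zero_mem_origami : (0 : ℂ) ∈ origami U :=
  mem_iUnion.mpr ⟨0, by simp [origamiStep]⟩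

lemma one_mem_origami : (1 : ℂ) ∈ origami U :=
  mem_iUnion.mpr ⟨0, by simp [origamiStep]⟩

lemma monotone_origamiStep {γ γ' : ℝ} (hγ : γ ∈ U) (hγ' : γ' ∈ U) (hne : γ ≠ γ') :
    Monotone (origamiStep U) :=
  monotone_nat_of_le_succ fun _ z hz =>
    ⟨z, hz, z, hz, γ, hγ, γ', hγ', hne, mem_lineThru_self z γ, mem_lineThru_self z γ'⟩

lemma mem_origami_of_mem_lineThru {u v w : ℂ} {γ γ' : ℝ} (hu : u ∈ origami U)
    (hv : v ∈ origami U) (hγ : γ ∈ U) (hγ' : γ' ∈ U) (hne : γ ≠ γ')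
    (hwu : w ∈ lineThru u γ) (hwv : w ∈ lineThru v γ') : w ∈ origami U := by
  obtain ⟨k, hk⟩ := mem_iUnion.mp hu
  obtain ⟨m, hm⟩ := mem_iUnion.mp hv
  have hmono := monotone_origamiStep hγ hγ' hne
  exact mem_iUnion.mpr ⟨max k m + 1, u, hmono (le_max_left k m) hk,
    v, hmono (le_max_right k m) hm, γ, hγ, γ', hγ', hne, hwu, hwv⟩

lemma one_sub_mem_origami {z : ℂ} (hz : z ∈ origami U) : 1 - z ∈ origami U := by
  obtain ⟨k, hk⟩ := mem_iUnion.mp hz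
  refine mem_iUnion.mpr ⟨k, ?_⟩
  induction k generalizing z with
  | zero =>
    rcases hk with rfl | rfl <;> simp [origamiStep]
  | succ n ih =>
    obtain ⟨p, hp, q, hq, γ, hγ, γ', hγ', hne, ⟨t, rfl⟩, ⟨t', ht'⟩⟩ := hk
    refine ⟨1 - p, ih (mem_iUnion.mpr ⟨n, hp⟩) hp, 1 - q, ih (mem_iUnion.mpr ⟨n, hq⟩) hq,
      γ, hγ, γ', hγ', hne, ⟨-t, ?_⟩, ⟨-t', ?_⟩⟩
    · push_cast; ring
    · rw [ht']; push_cast; ring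

lemma ofReal_proj_mem_origami (h0 : (0 : ℝ) ∈ U) {γ : ℝ} (hγ : γ ∈ U)
    (hsγ : Real.sin γ ≠ 0) {w : ℂ} (hw : w ∈ origami U) : (proj γ w : ℂ) ∈ origami U :=
  mem_origami_of_mem_lineThru hw zero_mem_origami hγ h0 (by rintro rfl; simp at hsγ)
    ((mem_lineThru_iff hsγ).mpr (proj_ofReal γ _)) (mem_lineThru_zero_iff.mpr (by simp))

variable (h0 : (0 : ℝ) ∈ U) {α β : ℝ} (hαU : α ∈ U) (hβU : β ∈ U)
  (hα : Real.sin α ≠ 0) (hβ : Real.sin β ≠ 0) (hαβ : Real.sin (α - β) ≠ 0)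
include h0 hαU hβU hα hβ hαβ

lemma mem_origami_iff_proj_mem {z : ℂ} :
    z ∈ origami U ↔ proj α z ∈ origamiR U ∧ proj β z ∈ origamiR U := by
  refine ⟨fun hz => ⟨ofReal_proj_mem_origami h0 hαU hα hz, ofReal_proj_mem_origami h0 hβU hβ hz⟩,
    fun ⟨hzα, hzβ⟩ => mem_origami_of_mem_lineThru hzα hzβ hαU hβU ?_
      ((mem_lineThru_iff hα).mpr (proj_ofReal α _).symm)
      ((mem_lineThru_iff hβ).mpr (proj_ofReal β _).symm)⟩
  rintro rfl
  simp at hαβ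

lemma add_mem_origamiR {x y : ℝ} (hx : x ∈ origamiR U) (hy : y ∈ origamiR U) :
    x + y ∈ origamiR U := by
  obtain ⟨p, hpα, hpβ⟩ := exists_proj_eq hα hβ hαβ 0 y
  have hp : p ∈ origami U := (mem_origami_iff_proj_mem h0 hαU hβU hα hβ hαβ).mpr
    ⟨hpα ▸ zero_mem_origami, hpβ ▸ hy⟩
  have hpx : p + x ∈ origami U :=
    mem_origami_of_mem_lineThru hp hx h0 hαU (by rintro rfl; simp at hα)
      (mem_lineThru_zero_iff.mpr (by simp))
      ((mem_lineThru_iff hα).mpr (by rw [proj_add, hpα, proj_ofReal, zero_add]))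
  have h := ofReal_proj_mem_origami h0 hβU hβ hpx
  rwa [proj_add, hpβ, proj_ofReal, add_comm] at h

lemma add_mem_origami {u v : ℂ} (hu : u ∈ origami U) (hv : v ∈ origami U) :
    u + v ∈ origami U := by
  rw [mem_origami_iff_proj_mem h0 hαU hβU hα hβ hαβ] at hu hv ⊢
  rw [proj_add, proj_add]
  exact ⟨add_mem_origamiR h0 hαU hβU hα hβ hαβ hu.1 hv.1,
    add_mem_origamiR h0 hαU hβU hα hβ hαβ hu.2 hv.2⟩

lemma neg_mem_origami {u : ℂ} (hu : u ∈ origami U) : -u ∈ origami U := by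
  have htwo := add_mem_origami h0 hαU hβU hα hβ hαβ one_mem_origami one_mem_origami
  have h := add_mem_origami h0 hαU hβU hα hβ hαβ (one_sub_mem_origami hu)
    (one_sub_mem_origami htwo)
  convert h using 1
  ring

def origamiAddSubgroup : AddSubgroup ℂ where
  carrier := origami U
  zero_mem' := zero_mem_origami
  add_mem' := add_mem_origami h0 hαU hβU hα hβ hαβ
  neg_mem' := neg_mem_origami h0 hαU hβU hα hβ hαβ

lemma mem_origami_iff_exists {w : ℂ} :
    w ∈ origami U ↔ ∃ r ∈ origamiR U, ∃ s ∈ origamiR U, w = r + s * inter α β 0 1 := by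
  set G := origamiAddSubgroup h0 hαU hβU hα hβ hαβ
  obtain ⟨heα, heβ⟩ := proj_inter hα hβ hαβ 0 1
  have hproj : ∀ r s : ℝ, proj α (r + s * inter α β 0 1) = r ∧
      proj β (r + s * inter α β 0 1) = r + s := fun r s => by
    simp only [proj_add, proj_ofReal, proj_ofReal_mul, heα, heβ]
    constructor <;> ring
  rw [mem_origami_iff_proj_mem h0 hαU hβU hα hβ hαβ]
  constructor
  · rintro ⟨hr, ht⟩
    have hs : ((proj β w - proj α w : ℝ) : ℂ) ∈ G := by
      push_cast
      exact G.sub_mem ht hr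
    refine ⟨proj α w, hr, proj β w - proj α w, hs, eq_of_proj_eq hα hβ hαβ ?_ ?_⟩
    · rw [(hproj _ _).1]
    · rw [(hproj _ _).2, add_sub_cancel]
  · rintro ⟨r, hr, s, hs, rfl⟩
    rw [(hproj r s).1, (hproj r s).2]
    exact ⟨hr, add_mem_origamiR h0 hαU hβU hα hβ hαβ hr hs⟩

end Closure

lemma sin_ne_zero_of_mem_Ico {θ : ℝ} (hθ : θ ∈ Ico 0 π) (hθ0 : θ ≠ 0) : Real.sin θ ≠ 0 :=
  (Real.sin_pos_of_pos_of_lt_pi (hθ.1.lt_of_ne' hθ0) hθ.2).ne'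

lemma sin_sub_ne_zero_of_mem_Ico {α β : ℝ} (hα : α ∈ Ico 0 π) (hβ : β ∈ Ico 0 π)
    (hαβ : α ≠ β) : Real.sin (α - β) ≠ 0 := by
  rw [Ne, Real.sin_eq_zero_iff_of_lt_of_lt (by linarith [hα.1, hβ.2]) (by linarith [hα.2, hβ.1]),
    sub_eq_zero]
  exact hαβ

end Origami

open Origami in
theorem origami_eq_span_general (U : Set ℝ) (hU : U ⊆ Set.Ico 0 Real.pi) (h0 : (0 : ℝ) ∈ U)
    (α β : ℝ) (hα : α ∈ U) (hβ : β ∈ U)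
    (hα0 : α ≠ 0) (hβ0 : β ≠ 0) (hαβ : α ≠ β) :
    origami U = {w : ℂ | ∃ r ∈ origamiR U, ∃ s ∈ origamiR U,
        w = (r : ℂ) + (s : ℂ) * inter α β 0 1} ∧
    ∃ G : AddSubgroup ℂ, (G : Set ℂ) = origami U := by
  have hsα := sin_ne_zero_of_mem_Ico (hU hα) hα0
  have hsβ := sin_ne_zero_of_mem_Ico (hU hβ) hβ0
  have hsαβ := sin_sub_ne_zero_of_mem_Ico (hU hα) (hU hβ) hαβ
  exact ⟨Set.ext fun _ => mem_origami_iff_exists h0 hα hβ hsα hsβ hsαβ,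
    origamiAddSubgroup h0 hα hβ hsα hsβ hsαβ, rfl⟩

theorem origami_eq_span (U : Set ℝ) (hU : U ⊆ Set.Ico 0 Real.pi) (h0 : (0 : ℝ) ∈ U)
    (hcard : 3 ≤ U.encard) (α β : ℝ) (hα : α ∈ U) (hβ : β ∈ U)
    (hα0 : α ≠ 0) (hβ0 : β ≠ 0) (hαβ : α ≠ β) :
    origami U = {w : ℂ | ∃ r ∈ origamiR U, ∃ s ∈ origamiR U,
        w = (r : ℂ) + (s : ℂ) * inter α β 0 1} ∧
    ∃ G : AddSubgroup ℂ, (G : Set ℂ) = origami U :=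
  origami_eq_span_general U hU h0 α β hα hβ hα0 hβ0 hαβ
end

section
/- Let α, β, γ, δ ∈ (0, π) with α ≠ β and γ ≠ δ, and let p(γ), p(δ) denote the γ- and δ-projections of ⟦0,1⟧_{α,β}. Then for all r, s ∈ ℝ: ⟦r,s⟧_{α,β} = ⟦r + (s−r)p(γ), r + (s−r)p(δ)⟧_{γ,δ}. -/
/-!
Every projection `proj θ` is `ℝ`-linear and fixes the reals, so the real affine map
`z ↦ r + (s - r) z` commutes with all of them. A point is determined by its projections along
two directions with distinct cotangents, and `cot` is injective on `(0, π)`. Hence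
`⟦r,s⟧_{α,β} = r + (s - r) ⟦0,1⟧_{α,β}`, and the `γ`- and `δ`-projections of the right-hand
side are the claimed coordinates.
-/

open Real Complex Set

lemma proj_eq_re_sub_im_mul_cot (θ : ℝ) (z : ℂ) : proj θ z = z.re - z.im * Real.cot θ := by
  rw [proj, Real.cot_eq_cos_div_sin, mul_div_assoc]

lemma proj_ofReal_add_mul (θ a c : ℝ) (z : ℂ) : proj θ (a + c * z) = a + c * proj θ z := by
  simp only [proj_eq_re_sub_im_mul_cot, add_re, add_im, ofReal_re, ofReal_im, re_ofReal_mul,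
    im_ofReal_mul]
  ring

lemma Real.injOn_cot : InjOn Real.cot (Ioo 0 π) := by
  intro α hα β hβ h
  have hsinα := sin_pos_of_pos_of_lt_pi hα.1 hα.2
  have hsinβ := sin_pos_of_pos_of_lt_pi hβ.1 hβ.2
  rw [Real.cot_eq_cos_div_sin, Real.cot_eq_cos_div_sin, div_eq_div_iff hsinα.ne' hsinβ.ne'] at h
  have hsin : Real.sin (β - α) = 0 := by rw [Real.sin_sub]; linarith
  rw [sin_eq_zero_iff_of_lt_of_lt (by linarith [hα.2, hβ.1]) (by linarith [hα.1, hβ.2])] at hsin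
  linarith

section TwoDirections

variable {α β : ℝ}

lemma exists_proj_eq_and_proj_eq (h : Real.cot α ≠ Real.cot β) (r s : ℝ) :
    ∃ z : ℂ, proj α z = r ∧ proj β z = s := by
  have hne : Real.cot β - Real.cot α ≠ 0 := sub_ne_zero.2 h.symm
  set y := (r - s) / (Real.cot β - Real.cot α)
  refine ⟨⟨r + y * Real.cot α, y⟩, ?_, ?_⟩ <;> rw [proj_eq_re_sub_im_mul_cot]
  · ring
  · simp only [y]; field_simp; ring

lemma eq_of_proj_eq_of_proj_eq (h : Real.cot α ≠ Real.cot β) {z w : ℂ}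
    (hα : proj α z = proj α w) (hβ : proj β z = proj β w) : z = w := by
  rw [proj_eq_re_sub_im_mul_cot, proj_eq_re_sub_im_mul_cot] at hα hβ
  have him : (z.im - w.im) * (Real.cot α - Real.cot β) = 0 := by linear_combination hβ - hα
  have him' : z.im = w.im := sub_eq_zero.1 ((mul_eq_zero.1 him).resolve_right (sub_ne_zero.2 h))
  exact Complex.ext (by rw [him'] at hα; linarith) him'

lemma proj_inter (h : Real.cot α ≠ Real.cot β) (r s : ℝ) :
    proj α (inter α β r s) = r ∧ proj β (inter α β r s) = s :=
  Classical.epsilon_spec (exists_proj_eq_and_proj_eq h r s)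

lemma inter_proj_proj (h : Real.cot α ≠ Real.cot β) (z : ℂ) :
    inter α β (proj α z) (proj β z) = z :=
  eq_of_proj_eq_of_proj_eq h (proj_inter h _ _).1 (proj_inter h _ _).2

lemma inter_eq_ofReal_add_mul_inter_zero_one (h : Real.cot α ≠ Real.cot β) (r s : ℝ) :
    inter α β r s = r + (s - r : ℝ) * inter α β 0 1 := by
  obtain ⟨h₀, h₁⟩ := proj_inter h 0 1
  obtain ⟨hr, hs⟩ := proj_inter h r s
  refine eq_of_proj_eq_of_proj_eq h ?_ ?_ <;> rw [proj_ofReal_add_mul]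
  · rw [hr, h₀]; ring
  · rw [hs, h₁]; ring

end TwoDirections

theorem coord_transform_forward (α β γ δ : ℝ)
    (hα : α ∈ Set.Ioo 0 Real.pi) (hβ : β ∈ Set.Ioo 0 Real.pi)
    (hγ : γ ∈ Set.Ioo 0 Real.pi) (hδ : δ ∈ Set.Ioo 0 Real.pi)
    (hαβ : α ≠ β) (hγδ : γ ≠ δ) (r s : ℝ) :
    inter α β r s =
      inter γ δ (r + (s - r) * proj γ (inter α β 0 1))
                (r + (s - r) * proj δ (inter α β 0 1)) := by
  rw [← proj_ofReal_add_mul, ← proj_ofReal_add_mul,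
    inter_proj_proj (Real.injOn_cot.ne hγ hδ hγδ),
    inter_eq_ofReal_add_mul_inter_zero_one (Real.injOn_cot.ne hα hβ hαβ)]
end
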